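/- arXiv:2104.00367 — 3 statements merged into one kernel-verified Lean document; each statement's English description precedes it below -/
import Mathlib

section
/- Let F : Δ × Δ → Δ be the join functor sending ([k],[l]) to [k+l+1] (concatenation of linear orders, acting accordingly on morphisms). Then for every [n] ∈ Δ, the comma category (F ↓ [n]), whose objects are triples ([k],[l], g : [k+l+1] → [n]), has a weakly contractible nerve; hence F is a coinitial (initial) functor. -/
open CategoryTheory Simplicial

/-- The join of two monotone maps: given `f : [a] → [c]` and `g : [b] → [d]`,
`joinMap f g : [a+b+1] → [c+d+1]` acts as `f` on the first block and as `g` on the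
second block. -/
def joinMap {a b c d : ℕ} (f : Fin (a + 1) →o Fin (c + 1)) (g : Fin (b + 1) →o Fin (d + 1)) :
    Fin (a + b + 2) →o Fin (c + d + 2) where
  toFun i :=
    if h : (i : ℕ) < a + 1 then
      ⟨(f ⟨(i : ℕ), h⟩ : ℕ), by have := (f ⟨(i : ℕ), h⟩).isLt; omega⟩
    else
      ⟨c + 1 + (g ⟨(i : ℕ) - (a + 1), by have := i.isLt; omega⟩ : ℕ), by
        have := (g ⟨(i : ℕ) - (a + 1), by have := i.isLt; omega⟩).isLt; omega⟩
  monotone' := by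
    intro i j hij
    have hij' : (i : ℕ) ≤ (j : ℕ) := hij
    dsimp only
    split_ifs with hi hj hj
    · have hm := f.monotone (show (⟨(i : ℕ), hi⟩ : Fin (a + 1)) ≤ ⟨(j : ℕ), hj⟩ from hij')
      exact Fin.mk_le_mk.mpr (Fin.le_def.mp hm)
    · have := (f ⟨(i : ℕ), hi⟩).isLt
      simp only [Fin.mk_le_mk]
      omega
    · omega
    · have hm := g.monotone (show (⟨(i : ℕ) - (a + 1), by have := i.isLt; omega⟩ : Fin (b + 1)) ≤
        ⟨(j : ℕ) - (a + 1), by have := j.isLt; omega⟩ from by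
          simp only [Fin.mk_le_mk]; omega)
      have hm' := Fin.le_def.mp hm
      simp only [Fin.mk_le_mk]
      omega

theorem joinMap_val {a b c d : ℕ} (f : Fin (a + 1) →o Fin (c + 1)) (g : Fin (b + 1) →o Fin (d + 1))
    (i : Fin (a + b + 2)) :
    ((joinMap f g i : Fin (c + d + 2)) : ℕ) =
      if h : (i : ℕ) < a + 1 then (f ⟨(i : ℕ), h⟩ : ℕ)
      else c + 1 + (g ⟨(i : ℕ) - (a + 1), by have := i.isLt; omega⟩ : ℕ) := by
  show (dite ((i : ℕ) < a + 1) _ _ : Fin (c + d + 2)).val = _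
  split_ifs <;> rfl

/-- The join functor `Δ × Δ → Δ`, `([k], [l]) ↦ [k + l + 1]`, acting blockwise on
morphisms. -/
def joinFunctor : SimplexCategory × SimplexCategory ⥤ SimplexCategory where
  obj p := SimplexCategory.mk (p.1.len + p.2.len + 1)
  map {p q} f := SimplexCategory.Hom.mk (joinMap f.1.toOrderHom f.2.toOrderHom)
  map_id := by
    intro p
    apply SimplexCategory.Hom.ext
    ext i
    simp only [SimplexCategory.Hom.toOrderHom_mk, SimplexCategory.id_toOrderHom, joinMap_val]
    split_ifs with h
    · rfl
    · simp
      omega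
  map_comp := by
    intro p q r f g
    apply SimplexCategory.Hom.ext
    ext i
    simp only [SimplexCategory.Hom.toOrderHom_mk, SimplexCategory.comp_toOrderHom,
      OrderHom.comp_coe, Function.comp_apply, joinMap_val]
    split_ifs with h1 h2 h2
    · rfl
    · exact absurd (f.1.toOrderHom ⟨(i : ℕ), h1⟩).isLt h2
    · omega
    · congr 2
      apply Fin.ext
      simp


/-!
An object `g : [k] ⋆ [l] → [n]` of `joinFunctor ↓ [n]` receives a map from the object
`([0], [0])` that picks out `(a, b) = (g 0, g (k + 1))`, the images of the bottom vertices of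
the two blocks. Two such pairs with the same `b` both map to `([n], [0])` with `i ↦ min i b`,
and two with the same `a` both map to `([0], [n])` with `i ↦ max a (i - 1)`. Hence every
object is joined to one fixed object by the zigzag `g ~ (a, b) ~ (0, b) ~ (0, 0)`.
-/

namespace joinFunctor

open SimplexCategory

variable {d : SimplexCategory}

def arrowOfMonotone (k l : ℕ) (f : ℕ → ℕ) (hf : Monotone f)
    (hle : ∀ i ≤ k + l + 1, f i ≤ d.len) : CostructuredArrow joinFunctor d :=
  CostructuredArrow.mk (Y := (⦋k⦌, ⦋l⦌)) <| Hom.mk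
    { toFun i := ⟨f i, Nat.lt_succ_of_le (hle i (Nat.lt_succ_iff.mp i.isLt))⟩
      monotone' _ _ hij := hf hij }

def arrowOfMonotoneHom {k l k' l' : ℕ} {f f' : ℕ → ℕ} {hf : Monotone f} {hf' : Monotone f'}
    {hle : ∀ i ≤ k + l + 1, f i ≤ d.len} {hle' : ∀ i ≤ k' + l' + 1, f' i ≤ d.len}
    (u : ⦋k⦌ ⟶ ⦋k'⦌) (v : ⦋l⦌ ⟶ ⦋l'⦌)
    (h : ∀ i, f' (joinMap u.toOrderHom v.toOrderHom i) = f i) :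
    arrowOfMonotone k l f hf hle ⟶ arrowOfMonotone k' l' f' hf' hle' :=
  CostructuredArrow.homMk (u, v) (Hom.ext _ _ (OrderHom.ext _ _ (funext fun i => Fin.ext (h i))))

def pairArrow (a b : ℕ) (hab : a ≤ b) (hb : b ≤ d.len) : CostructuredArrow joinFunctor d :=
  arrowOfMonotone 0 0 (fun i => if i = 0 then a else b)
    (fun i j hij => by dsimp only; split_ifs <;> omega) (fun i _ => by split_ifs <;> omega)

def headArrow (b : ℕ) (hb : b ≤ d.len) : CostructuredArrow joinFunctor d :=
  arrowOfMonotone d.len 0 (fun i => min i b) (fun _ _ hij => min_le_min_right b hij)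
    (fun _ _ => min_le_of_right_le hb)

def tailArrow (a : ℕ) (ha : a ≤ d.len) : CostructuredArrow joinFunctor d :=
  arrowOfMonotone 0 d.len (fun i => max a (i - 1)) (fun _ _ hij => max_le_max_left a (by omega))
    (fun _ _ => max_le ha (by omega))

def pairArrowToMk {p : SimplexCategory × SimplexCategory} (g : joinFunctor.obj p ⟶ d) :
    pairArrow (g.toOrderHom 0) (g.toOrderHom ⟨p.1.len + 1, by simp [joinFunctor]⟩)
      (g.toOrderHom.monotone (Fin.zero_le _)) (Nat.lt_succ_iff.mp (Fin.is_lt _)) ⟶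
      CostructuredArrow.mk g :=
  CostructuredArrow.homMk (const ⦋0⦌ p.1 0, const ⦋0⦌ p.2 0) <|
    Hom.ext _ _ (OrderHom.ext _ _ (funext fun i => by fin_cases i <;> rfl))

def pairArrowToHeadArrow (a b : ℕ) (hab : a ≤ b) (hb : b ≤ d.len) :
    pairArrow a b hab hb ⟶ headArrow b hb :=
  arrowOfMonotoneHom (const ⦋0⦌ ⦋d.len⦌ ⟨a, Nat.lt_succ_of_le (hab.trans hb)⟩) (𝟙 _) fun i => by
    fin_cases i <;> simp [joinMap_val] <;> omega

def pairArrowToTailArrow (a b : ℕ) (hab : a ≤ b) (hb : b ≤ d.len) :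
    pairArrow a b hab hb ⟶ tailArrow a (hab.trans hb) :=
  arrowOfMonotoneHom (𝟙 _) (const ⦋0⦌ ⦋d.len⦌ ⟨b, Nat.lt_succ_of_le hb⟩) fun i => by
    fin_cases i <;> simp [joinMap_val, hab]

theorem zigzag_pairArrow_fst {a a' b : ℕ} (hab : a ≤ b) (ha'b : a' ≤ b) (hb : b ≤ d.len) :
    Zigzag (pairArrow a b hab hb) (pairArrow a' b ha'b hb) :=
  Zigzag.of_hom_inv (pairArrowToHeadArrow a b hab hb) (pairArrowToHeadArrow a' b ha'b hb)

theorem zigzag_pairArrow_snd {a b b' : ℕ} (hab : a ≤ b) (hab' : a ≤ b') (hb : b ≤ d.len)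
    (hb' : b' ≤ d.len) : Zigzag (pairArrow a b hab hb) (pairArrow a b' hab' hb') :=
  Zigzag.of_hom_inv (pairArrowToTailArrow a b hab hb) (pairArrowToTailArrow a b' hab' hb')

theorem zigzag_pairArrow_zero_zero (X : CostructuredArrow joinFunctor d) :
    Zigzag X (pairArrow 0 0 le_rfl (Nat.zero_le d.len)) :=
  (Zigzag.of_inv (pairArrowToMk X.hom)).trans <|
    (zigzag_pairArrow_fst _ (Nat.zero_le _) _).trans (zigzag_pairArrow_snd _ _ _ _)

end joinFunctor

open joinFunctor in
/-- For every `[n]`, the comma category `(joinFunctor ↓ [n])` has a weakly contractible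
nerve; hence the join functor `Δ × Δ → Δ` is coinitial (initial). -/
theorem joinFunctor_initial : joinFunctor.Initial := by
  refine ⟨fun d => ?_⟩
  have : Nonempty (CostructuredArrow joinFunctor d) := ⟨pairArrow 0 0 le_rfl (Nat.zero_le d.len)⟩
  exact zigzag_isConnected fun X Y =>
    (zigzag_pairArrow_zero_zero X).trans (zigzag_pairArrow_zero_zero Y).symm
end

section
/- Let T be a monad on a category C and x an object of C. Then T-algebra structures on x correspond bijectively to liftings of the monad T to a monad T̃ on the slice category C/x (compatible with the forgetful functor C/x → C, including units and multiplications). Under this correspondence, a T-algebra structure (x, m : Tx → x) yields the lifted monad T̃(f : y → x) = (m ∘ T(f) : Ty → x). -/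
open CategoryTheory

universe v u

variable {C : Type u} [Category.{v} C]

/-- A lifting of a monad `T` on `C` to the slice category `C/x`: a monad on `C/x`
together with an isomorphism commuting with the forgetful functor `C/x → C`, which is
moreover compatible with the units and multiplications. -/
structure MonadLifting (T : Monad C) (x : C) where
  /-- The lifted monad on the slice category. -/
  L : Monad (Over x)
  /-- The compatibility isomorphism with the forgetful functor. -/
  iso : L.toFunctor ⋙ Over.forget x ≅ Over.forget x ⋙ T.toFunctor
  /-- Compatibility with the units. -/
  unit_comm : ∀ f : Over x,
    (Over.forget x).map (L.η.app f) ≫ iso.hom.app f = T.η.app f.left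
  /-- Compatibility with the multiplications. -/
  mul_comm : ∀ f : Over x,
    (Over.forget x).map (L.μ.app f) ≫ iso.hom.app f =
      iso.hom.app (L.obj f) ≫ (T : C ⥤ C).map (iso.hom.app f) ≫ T.μ.app f.left

/-!
An algebra `m : T x ⟶ x` lifts `T` to `C/x` by `f ↦ m ∘ T f`, keeping the unit and
multiplication of `T`: the algebra laws are exactly what makes `η` and `μ` morphisms over `x`.
Conversely, a lifting `L` yields `m` as the structure morphism of `L` at the terminal object
`𝟙 x` of `C/x`, read through `L.iso`. Naturality of `L.iso` along the unique map `f ⟶ 𝟙 x`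
gives the formula for `L f`, and the unit and multiplication compatibilities at `𝟙 x` give the
algebra laws; the formula at `𝟙 x` alone already forces `m`.
-/

namespace CategoryTheory.Monad.Algebra

variable {T : Monad C} (A : T.Algebra)

lemma η_app_comp_map_comp_a {y : C} (f : y ⟶ A.A) : T.η.app y ≫ T.map f ≫ A.a = f := by
  rw [← T.η.naturality_assoc, Functor.id_map, A.unit]
  exact Category.comp_id f

lemma μ_app_comp_map_comp_a {y : C} (f : y ⟶ A.A) :
    T.μ.app y ≫ T.map f ≫ A.a = T.map (T.map f ≫ A.a) ≫ A.a := by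
  rw [← T.μ.naturality_assoc, A.assoc, Functor.map_comp, Category.assoc]
  rfl

def liftOver : Monad (Over A.A) where
  toFunctor := Over.post (T : C ⥤ C) ⋙ Over.map A.a
  η.app f := Over.homMk (T.η.app f.left) (A.η_app_comp_map_comp_a f.hom)
  μ.app f := Over.homMk (T.μ.app f.left) (A.μ_app_comp_map_comp_a f.hom)
  η.naturality _ _ u := by ext; exact T.η.naturality u.left
  μ.naturality _ _ u := by ext; exact T.μ.naturality u.left
  left_unit f := by ext; exact T.left_unit f.left
  right_unit f := by ext; exact T.right_unit f.left
  assoc f := by ext; exact T.assoc f.left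

def monadLifting : MonadLifting T A.A where
  L := A.liftOver
  iso := Iso.refl _
  unit_comm _ := Category.comp_id _
  mul_comm f := by
    show T.μ.app f.left ≫ 𝟙 _ = 𝟙 _ ≫ T.map (𝟙 _) ≫ T.μ.app f.left
    simp

end CategoryTheory.Monad.Algebra

namespace MonadLifting

variable {T : Monad C} {x : C} (L : MonadLifting T x)

-- `L.iso.app f` with source and target spelled as objects of `C`, so that `rw` sees
-- composites with morphisms of `C` as well-typed.
def isoApp (f : Over x) : (L.L.obj f).left ≅ (T : C ⥤ C).obj f.left :=
  L.iso.app f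

lemma isoApp_hom_naturality {f g : Over x} (u : f ⟶ g) :
    (L.L.map u).left ≫ (L.isoApp g).hom = (L.isoApp f).hom ≫ (T : C ⥤ C).map u.left :=
  L.iso.hom.naturality u

def structureMap : (T : C ⥤ C).obj x ⟶ x :=
  (L.isoApp (Over.mk (𝟙 x))).inv ≫ (L.L.obj (Over.mk (𝟙 x))).hom

lemma isoApp_hom_comp_structureMap :
    (L.isoApp (Over.mk (𝟙 x))).hom ≫ L.structureMap = (L.L.obj (Over.mk (𝟙 x))).hom :=
  Iso.hom_inv_id_assoc _ _

lemma obj_hom (f : Over x) :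
    (L.L.obj f).hom = (L.isoApp f).hom ≫ (T : C ⥤ C).map f.hom ≫ L.structureMap := by
  rw [← Over.w (L.L.map (Over.homMk f.hom : f ⟶ Over.mk (𝟙 x))),
    ← isoApp_hom_comp_structureMap, reassoc_of% isoApp_hom_naturality]
  rfl

lemma η_app_comp_structureMap : T.η.app x ≫ L.structureMap = 𝟙 x := by
  have unit : (L.L.η.app (Over.mk (𝟙 x))).left ≫ (L.isoApp _).hom = T.η.app x :=
    L.unit_comm _
  rw [← unit, Category.assoc, isoApp_hom_comp_structureMap]
  exact Over.w _

lemma μ_app_comp_structureMap :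
    T.μ.app x ≫ L.structureMap = (T : C ⥤ C).map L.structureMap ≫ L.structureMap := by
  let top := Over.mk (𝟙 x)
  have mul : (L.L.μ.app top).left ≫ (L.isoApp top).hom =
      (L.isoApp (L.L.obj top)).hom ≫ (T : C ⥤ C).map (L.isoApp top).hom ≫ T.μ.app x :=
    L.mul_comm top
  rw [← cancel_epi ((L.isoApp (L.L.obj top)).hom ≫ (T : C ⥤ C).map (L.isoApp top).hom)]
  calc _ = (L.L.μ.app top).left ≫ (L.isoApp top).hom ≫ L.structureMap := by
        rw [reassoc_of% mul, Category.assoc]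
    _ = (L.L.obj (L.L.obj top)).hom := by
        rw [isoApp_hom_comp_structureMap]
        exact Over.w _
    _ = _ := by
        rw [obj_hom, ← isoApp_hom_comp_structureMap, Functor.map_comp, Category.assoc,
          Category.assoc]

lemma eq_structureMap_of_obj_hom {m : (T : C ⥤ C).obj x ⟶ x}
    (hm : ∀ f : Over x, (L.L.obj f).hom = (L.isoApp f).hom ≫ (T : C ⥤ C).map f.hom ≫ m) :
    m = L.structureMap := by
  rw [← cancel_epi (L.isoApp (Over.mk (𝟙 x))).hom, isoApp_hom_comp_structureMap, hm]
  simp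

end MonadLifting

/-- `T`-algebra structures on an object `x` correspond bijectively to liftings of the
monad `T` to the slice category `C/x`; under the correspondence, the algebra
structure `m : T x ⟶ x` yields the lifted monad `f ↦ (m ∘ T f : T y ⟶ x)`. -/
theorem algebra_structures_correspond_to_monad_liftings (T : Monad C) (x : C) :
    (∀ m : (T : C ⥤ C).obj x ⟶ x,
      T.η.app x ≫ m = 𝟙 x →
      T.μ.app x ≫ m = (T : C ⥤ C).map m ≫ m →
        ∃ L : MonadLifting T x, ∀ f : Over x,
          (L.L.obj f).hom = L.iso.hom.app f ≫ (T : C ⥤ C).map f.hom ≫ m) ∧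
    (∀ L : MonadLifting T x,
      ∃! m : (T : C ⥤ C).obj x ⟶ x,
        T.η.app x ≫ m = 𝟙 x ∧
        T.μ.app x ≫ m = (T : C ⥤ C).map m ≫ m ∧
        ∀ f : Over x,
          (L.L.obj f).hom = L.iso.hom.app f ≫ (T : C ⥤ C).map f.hom ≫ m) := by
  refine ⟨fun m unit assoc => ?_, fun L => ?_⟩
  · let A : T.Algebra := ⟨x, m, unit, assoc⟩
    exact ⟨A.monadLifting, fun f => (Category.id_comp _).symm⟩
  · refine ⟨L.structureMap,
      ⟨L.η_app_comp_structureMap, L.μ_app_comp_structureMap, L.obj_hom⟩, ?_⟩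
    rintro m ⟨-, -, hm⟩
    exact L.eq_structureMap_of_obj_hom hm
end

section
/- Let T be a monad on a category C, x an object of C with a T-algebra structure m : Tx → x, and T̃ the induced lifted monad on C/x (sending f : y → x to m ∘ T(f) : Ty → x). Then the category of T̃-algebras in C/x is equivalent to the slice category of T-algebras over the T-algebra (x, m): Alg(T̃) ≃ Alg(T)/(x,m). -/
open CategoryTheory

universe v u

variable {C : Type u} [Category.{v} C]

/-- The lift to the slice category `C/x` of the endofunctor of a monad `T`
associated to an algebra structure `m : T x ⟶ x`: it sends `(f : y → x)` to
`(m ∘ T f : T y → x)`. -/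
@[simps]
def liftOfFunctor (T : Monad C) {x : C} (m : (T : C ⥤ C).obj x ⟶ x) : Over x ⥤ Over x where
  obj f := Over.mk ((T : C ⥤ C).map f.hom ≫ m)
  map {f g} u := Over.homMk ((T : C ⥤ C).map u.left) (by
    dsimp
    rw [← Category.assoc, ← Functor.map_comp, Over.w])

/-- The lifted monad `T̃` on `C/x` induced by a `T`-algebra structure `m : T x ⟶ x`,
sending `(f : y → x)` to `(m ∘ T f : T y → x)`, with unit and multiplication
inherited from `T`. -/
def liftedMonad (T : Monad C) {x : C} (m : (T : C ⥤ C).obj x ⟶ x)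
    (h1 : T.η.app x ≫ m = 𝟙 x)
    (h2 : T.μ.app x ≫ m = (T : C ⥤ C).map m ≫ m) : Monad (Over x) where
  toFunctor := liftOfFunctor T m
  η :=
    { app := fun f => Over.homMk (T.η.app f.left) (by
        dsimp
        show T.η.app f.left ≫ ((T : C ⥤ C).map f.hom ≫ m) = f.hom
        rw [← Category.assoc]
        erw [← T.η.naturality f.hom]
        dsimp
        rw [Category.assoc, h1, Category.comp_id])
      naturality := by
        intro f g u
        ext
        exact T.η.naturality u.left }
  μ :=
    { app := fun f => Over.homMk (T.μ.app f.left) (by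
        dsimp
        show T.μ.app f.left ≫ ((T : C ⥤ C).map f.hom ≫ m) =
          (T : C ⥤ C).map ((T : C ⥤ C).map f.hom ≫ m) ≫ m
        rw [← Category.assoc]
        erw [← T.μ.naturality f.hom]
        dsimp
        rw [Category.assoc, h2, ← Category.assoc, ← Functor.map_comp]
      )
      naturality := by
        intro f g u
        ext
        exact T.μ.naturality u.left }
  left_unit := by
    intro f
    ext
    exact T.left_unit f.left
  right_unit := by
    intro f
    ext
    exact T.right_unit f.left
  assoc := by
    intro f
    ext
    exact T.assoc f.left

/-! A `T̃`-algebra structure on `f : y ⟶ x` is a map `a : T y ⟶ y` over `x`, i.e. with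
`a ≫ f = T f ≫ m`, satisfying the `T`-algebra laws (the unit and multiplication of `T̃` lie over
those of `T`). The condition over `x` says exactly that `f` is a morphism of `T`-algebras into
`(x, m)`, and morphisms match in the same way, so the two categories differ only by repackaging
and the equivalence has identity unit and counit. -/

namespace liftedMonad

variable (T : Monad C) {x : C} (m : (T : C ⥤ C).obj x ⟶ x)
    (h1 : T.η.app x ≫ m = 𝟙 x)
    (h2 : T.μ.app x ≫ m = (T : C ⥤ C).map m ≫ m)

abbrev baseAlgebra : Monad.Algebra T where
  A := x
  a := m
  unit := h1
  assoc := h2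

def algebraToMonadAlgebra (A : (liftedMonad T m h1 h2).Algebra) : Monad.Algebra T where
  A := A.A.left
  a := A.a.left
  unit := congrArg CommaMorphism.left A.unit
  assoc := congrArg CommaMorphism.left A.assoc

def algebraToOver : (liftedMonad T m h1 h2).Algebra ⥤ Over (baseAlgebra T m h1 h2) where
  obj A := Over.mk (Y := algebraToMonadAlgebra T m h1 h2 A)
    { f := A.A.hom
      h := (Over.w A.a).symm }
  map u := Over.homMk
    { f := u.f.left
      h := congrArg CommaMorphism.left u.h }
    (Monad.Algebra.Hom.ext (Over.w u.f))

def overToAlgebra : Over (baseAlgebra T m h1 h2) ⥤ (liftedMonad T m h1 h2).Algebra where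
  obj g :=
    { A := Over.mk g.hom.f
      a := Over.homMk g.left.a g.hom.h.symm
      unit := Over.OverMorphism.ext g.left.unit
      assoc := Over.OverMorphism.ext g.left.assoc }
  map u :=
    { f := Over.homMk u.left.f (congrArg Monad.Algebra.Hom.f (Over.w u))
      h := Over.OverMorphism.ext u.left.h }

def algebraEquivOver : (liftedMonad T m h1 h2).Algebra ≌ Over (baseAlgebra T m h1 h2) :=
  CategoryTheory.Equivalence.mk (algebraToOver T m h1 h2) (overToAlgebra T m h1 h2)
    (NatIso.ofComponents (fun _ => Iso.refl _)
      fun f => (Category.comp_id f).trans (Category.id_comp f).symm)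
    (NatIso.ofComponents (fun _ => Iso.refl _)
      fun f => (Category.comp_id f).trans (Category.id_comp f).symm)

end liftedMonad

/-- Given a monad `T` on `C` and a `T`-algebra structure `m : T x ⟶ x`, the category
of algebras for the lifted monad `T̃` on `C/x` is equivalent to the slice category of
`T`-algebras over the algebra `(x, m)`. -/
theorem liftedMonad_algebras_equiv_over (T : Monad C) {x : C}
    (m : (T : C ⥤ C).obj x ⟶ x)
    (h1 : T.η.app x ≫ m = 𝟙 x)
    (h2 : T.μ.app x ≫ m = (T : C ⥤ C).map m ≫ m) :
    Nonempty ((liftedMonad T m h1 h2).Algebra ≌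
      Over ({ A := x, a := m, unit := h1, assoc := h2 } : Monad.Algebra T)) :=
  ⟨liftedMonad.algebraEquivOver T m h1 h2⟩
end
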